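/- Let n = 2r + 1 be an odd positive integer. Then the ℂ-vector space of functions ZMod n → ℂ is the internal direct sum of the line ℂ·f_0 and the subspaces V_s for 1 ≤ s ≤ r; each V_s is two-dimensional and invariant under every λ_t, and ℂ·f_0 is invariant under every λ_t. (This is the decomposition ℂR_n = ℂ(1,1) ⊕ ⨁_{s=1}^{(n−1)/2} W(ω_n^{2s}) of the regular quandle representation of R_n for odd n.) -/

import Mathlib

/-! The functions `f_s` are the additive characters `x ↦ e(s x)` of `ZMod n`, where
`e = ZMod.stdAddChar` sends `j` to `exp(2πij/n)`; being `n` distinct characters they form a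
basis of `ZMod n → ℂ`. Reflection turns `f_s` into a multiple of `f_{-s}`, so the span of the
characters indexed by any set closed under negation is invariant. For odd `n = 2r + 1` the sets
`{0}, {±1}, …, {±r}` partition `ZMod n`, which gives the direct sum, and `s ≠ -s` for
`1 ≤ s ≤ r`, which gives the dimension. -/

/-- The regular representation of the dihedral quandle `R_n = Quandle.dihedral n`
(`ZMod n` with `x ◃ y = 2y - x`) on functions `ZMod n → ℂ`:
`(λ_t f)(x) = f (2t - x)`. -/
def lam (n : ℕ) (t : ZMod n) (f : ZMod n → ℂ) : ZMod n → ℂ :=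
  fun x => f (2 * t - x)

/-- `ω = exp(2πi/n)`. -/
noncomputable def dihedralOmega (n : ℕ) : ℂ :=
  Complex.exp (2 * Real.pi * Complex.I / n)

/-- The character `f_s : ZMod n → ℂ`, `f_s(x) = ω^{s·x.val}`. -/
noncomputable def chi (n : ℕ) (s : ℤ) : ZMod n → ℂ :=
  fun x => dihedralOmega n ^ (s * (x.val : ℤ))

/-- `V_s`: the `ℂ`-linear span of `{f_s, f_{-s}}` in `ZMod n → ℂ`. -/
noncomputable def Vsub (n : ℕ) (s : ℤ) : Submodule ℂ (ZMod n → ℂ) :=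
  Submodule.span ℂ {chi n s, chi n (-s)}

open Function Submodule Set ZMod

theorem LinearIndependent.isInternal_span_image {R M ι κ : Type*} [Ring R] [AddCommGroup M]
    [Module R M] [DecidableEq κ] {v : ι → M} (hv : LinearIndependent R v)
    (hspan : span R (range v) = ⊤) {S : κ → Set ι} (hS : Pairwise (Disjoint on S))
    (hcover : ⋃ j, S j = univ) :
    DirectSum.IsInternal fun j => span R (v '' S j) := by
  refine DirectSum.isInternal_submodule_of_iSupIndep_of_iSup_eq_top (fun j => ?_) ?_
  · simp only [← span_iUnion, ← image_iUnion]
    exact hv.disjoint_span_image (disjoint_iUnion₂_right.mpr fun k hk => hS (Ne.symm hk))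
  · rw [← hspan, ← image_univ, ← hcover, image_iUnion, span_iUnion]

theorem LinearIndependent.finrank_span_image_pair {K M ι : Type*} [DivisionRing K]
    [AddCommGroup M] [Module K M] {v : ι → M} (hv : LinearIndependent K v) {a b : ι}
    (hab : a ≠ b) : Module.finrank K (span K (v '' {a, b})) = 2 := by
  have hinj : Injective ![a, b] := by
    intro i j
    fin_cases i <;> fin_cases j <;> simp [hab, hab.symm]
  have := finrank_span_eq_card (hv.comp _ hinj)
  rwa [range_comp, Matrix.range_cons_cons_empty, Fintype.card_fin] at this

namespace ZMod

theorem natCast_eq_neg_natCast_iff {n i j : ℕ} (h : i + j < n) :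
    (i : ZMod n) = -j ↔ i = 0 ∧ j = 0 := by
  rw [eq_neg_iff_add_eq_zero, ← Nat.cast_add, natCast_eq_zero_iff]
  constructor
  · intro hdvd
    have := Nat.eq_zero_of_dvd_of_lt hdvd h
    omega
  · rintro ⟨rfl, rfl⟩
    exact dvd_zero n

theorem disjoint_natCast_pair {n r i j : ℕ} (hn : 2 * r < n) (hi : i ≤ r) (hj : j ≤ r)
    (hij : i ≠ j) :
    Disjoint ({(i : ZMod n), -(i : ZMod n)} : Set (ZMod n)) {(j : ZMod n), -(j : ZMod n)} := by
  have hcast : (j : ZMod n) ≠ i := fun h => hij (by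
    rw [← val_cast_of_lt (show i < n by omega), ← h, val_cast_of_lt (show j < n by omega)])
  have hneg : (j : ZMod n) ≠ -i := fun h => hij (by
    have := (natCast_eq_neg_natCast_iff (by omega)).mp h
    omega)
  simp [hcast, hneg, neg_eq_iff_eq_neg]

theorem exists_natCast_eq_or_eq_neg {n r : ℕ} [NeZero n] (hn : n ≤ 2 * r + 1) (k : ZMod n) :
    ∃ j ≤ r, k = j ∨ k = -j := by
  by_cases hk : k.val ≤ r
  · exact ⟨k.val, hk, Or.inl (natCast_zmod_val k).symm⟩
  · refine ⟨n - k.val, by omega, Or.inr ?_⟩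
    rw [Nat.cast_sub k.val_lt.le, natCast_self, natCast_zmod_val, zero_sub, neg_neg]

end ZMod

section stdChar

variable {n : ℕ} [NeZero n]

variable (n) in
noncomputable def stdChar (k : ZMod n) : ZMod n → ℂ :=
  stdAddChar.mulShift k

theorem linearIndependent_stdChar : LinearIndependent ℂ (stdChar n) :=
  (AddChar.linearIndependent (ZMod n) ℂ).comp _
    (AddChar.to_mulShift_inj_of_isPrimitive (isPrimitive_stdAddChar n))

theorem span_range_stdChar : span ℂ (range (stdChar n)) = ⊤ :=
  linearIndependent_stdChar.span_eq_top_of_card_eq_finrank'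
    (Module.finrank_fintype_fun_eq_card ℂ).symm

theorem chi_eq_stdChar (s : ℤ) : chi n s = stdChar n s := by
  funext x
  have hcast : (s : ZMod n) * x = ((s * x.val : ℤ) : ZMod n) := by
    push_cast [natCast_zmod_val]
    rfl
  rw [chi, dihedralOmega, ← Complex.exp_int_mul, stdChar, AddChar.mulShift_apply, hcast,
    stdAddChar_coe]
  congr 1
  push_cast
  ring

theorem Vsub_eq_span_stdChar (s : ℤ) :
    Vsub n s = span ℂ (stdChar n '' {(s : ZMod n), -(s : ZMod n)}) := by
  rw [Vsub, image_pair, chi_eq_stdChar, chi_eq_stdChar, Int.cast_neg]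

theorem lam_stdChar (t k : ZMod n) :
    lam n t (stdChar n k) = stdAddChar (2 * t * k) • stdChar n (-k) := by
  funext x
  simp only [lam, stdChar, AddChar.mulShift_apply, Pi.smul_apply, smul_eq_mul,
    ← AddChar.map_add_eq_mul]
  ring_nf

theorem lam_mem_span_stdChar_image {S : Set (ZMod n)} (hS : ∀ k ∈ S, -k ∈ S) (t : ZMod n)
    {f : ZMod n → ℂ} (hf : f ∈ span ℂ (stdChar n '' S)) :
    lam n t f ∈ span ℂ (stdChar n '' S) := by
  let L := LinearMap.funLeft ℂ ℂ fun x : ZMod n => 2 * t - x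
  have hL : span ℂ (stdChar n '' S) ≤ (span ℂ (stdChar n '' S)).comap L := by
    rw [span_le]
    rintro _ ⟨k, hk, rfl⟩
    change lam n t (stdChar n k) ∈ span ℂ (stdChar n '' S)
    rw [lam_stdChar]
    exact smul_mem _ _ (subset_span ⟨-k, hS k hk, rfl⟩)
  exact hL hf

theorem isInternal_span_stdChar_natCast_pair {r : ℕ} (hn : n = 2 * r + 1) :
    DirectSum.IsInternal fun i : Fin (r + 1) =>
      span ℂ (stdChar n '' {((i : ℕ) : ZMod n), -((i : ℕ) : ZMod n)}) := by
  refine linearIndependent_stdChar.isInternal_span_image span_range_stdChar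
    (fun i j hij => disjoint_natCast_pair (r := r) (by omega) (by omega) (by omega)
      (Fin.val_ne_of_ne hij))
    (eq_univ_of_forall fun k => ?_)
  obtain ⟨j, hj, hk⟩ := exists_natCast_eq_or_eq_neg hn.le k
  exact mem_iUnion.mpr ⟨⟨j, by omega⟩, hk⟩

end stdChar

/-- For odd `n = 2r + 1`, the space of functions `ZMod n → ℂ` is the internal
direct sum of the line `ℂ·f_0` and the subspaces `V_s`, `1 ≤ s ≤ r`; each `V_s`
is two-dimensional and invariant under every `λ_t`, and `ℂ·f_0` is invariant
under every `λ_t`.  This is the decomposition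
`ℂR_n ≅ ℂ(1,1) ⊕ ⨁_{s=1}^{(n-1)/2} W(ω_n^{2s})` for odd `n`. -/
theorem regular_decomposition_odd (n r : ℕ) (hn : n = 2 * r + 1) :
    DirectSum.IsInternal (fun i : Fin (r + 1) =>
      if (i : ℕ) = 0 then (ℂ ∙ chi n 0) else Vsub n (i : ℕ)) ∧
    (∀ s : ℤ, 1 ≤ s → s ≤ (r : ℤ) → Module.finrank ℂ (Vsub n s) = 2) ∧
    (∀ s : ℤ, 1 ≤ s → s ≤ (r : ℤ) → ∀ t : ZMod n, ∀ f ∈ Vsub n s, lam n t f ∈ Vsub n s) ∧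
    (∀ t : ZMod n, ∀ f ∈ (ℂ ∙ chi n 0), lam n t f ∈ (ℂ ∙ chi n 0)) := by
  have : NeZero n := ⟨by omega⟩
  have hline : (ℂ ∙ chi n 0) = span ℂ (stdChar n '' {0}) := by
    rw [image_singleton, chi_eq_stdChar, Int.cast_zero]
  refine ⟨?_, fun s hs hsr => ?_, fun s _ _ t f hf => ?_, fun t f hf => ?_⟩
  · convert isInternal_span_stdChar_natCast_pair hn using 2 with i
    split_ifs with h
    · rw [hline, h, Nat.cast_zero, neg_zero, pair_eq_singleton]
    · rw [Vsub_eq_span_stdChar, Int.cast_natCast]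
  · lift s to ℕ using (by omega)
    rw [Vsub_eq_span_stdChar, Int.cast_natCast]
    refine linearIndependent_stdChar.finrank_span_image_pair fun h => ?_
    have := (natCast_eq_neg_natCast_iff (by omega)).mp h
    omega
  · rw [Vsub_eq_span_stdChar] at hf ⊢
    exact lam_mem_span_stdChar_image (by simp [neg_eq_iff_eq_neg, or_comm]) t hf
  · rw [hline] at hf ⊢
    exact lam_mem_span_stdChar_image (by simp) t hf
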